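/- Delaunay mosaic and inscribed polytope: Let X ⊆ S^n be finite and in general position. A simplex Q ⊆ X belongs to the Delaunay mosaic Del(X) if and only if there is an (n−1)-sphere S ⊂ S^n that contains Q, is not a great-sphere, and whose empty cap is the small cap; equivalently, the simplices of Del(X) are exactly the faces of those facets of conv(X) ⊂ ℝ^{n+1} whose small caps are empty. In particular, if X is not contained in any closed hemisphere of S^n, then Del(X) is isomorphic to the boundary complex of the convex polytope conv(X). -/

import Mathlib

open MeasureTheory Metric Set
open scoped ENNReal

noncomputable section

namespace SphDel

/-- The ambient Euclidean space `ℝ^{n+1}`. -/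
abbrev E (n : ℕ) := EuclideanSpace ℝ (Fin (n+1))

/-- The unit sphere `S^n ⊆ ℝ^{n+1}` as a set. -/
def S (n : ℕ) : Set (E n) := Metric.sphere (0 : E n) 1

/-- The geodesic distance on `S^n`, `d(x,y) = 2 arcsin(‖x-y‖/2)`. -/
def gdist {n : ℕ} (x y : E n) : ℝ := 2 * Real.arcsin (dist x y / 2)

/-- `σ_m`, the (m-1)-dimensional surface area of the unit sphere `S^{m-1} ⊆ ℝ^m`. -/
def sphereArea (m : ℕ) : ℝ := m * (volume (ball (0 : EuclideanSpace ℝ (Fin m)) 1)).toReal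

/-- `ν_n = σ_n / n`, the volume of the unit ball in `ℝ^n`. -/
def ballVol (n : ℕ) : ℝ := sphereArea n / n

/-- The surface-area measure on the unit sphere `S^n`, as a measure on the ambient `ℝ^{n+1}`. -/
def surface (n : ℕ) : Measure (E n) :=
  Measure.map Subtype.val ((volume : Measure (E n)).toSphere)

/-- Number of points of the finite set `X` lying in `B`. -/
def count {n : ℕ} (X : Finset (E n)) (B : Set (E n)) : ℕ :=
  ((X : Set (E n)) ∩ B).ncard

/-- A finite point set on the sphere is in general position (cf. Section 3 of the paper). -/
def GenPos {n : ℕ} (X : Finset (E n)) : Prop :=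
  (n + 1 : ℕ) < X.card ∧
  ∀ k : ℕ, k < n →
    (∀ Y : Finset (E n), Y ⊆ X → Y.card = k+3 →
      ¬ ∃ A : AffineSubspace ℝ (E n), Module.finrank ℝ A.direction ≤ k+1 ∧
          (Y : Set (E n)) ⊆ (A : Set (E n))) ∧
    (∀ Y : Finset (E n), Y ⊆ X → Y.card = k+3 →
      ∀ c : E n, c ∈ affineSpan ℝ (Y : Set (E n)) → (∃ R : ℝ, ∀ y ∈ Y, dist y c = R) →
        ∀ Z : Finset (E n), Z ⊆ Y → Z.card = k+2 →
          c ∉ affineSpan ℝ (Z : Set (E n)))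

/-- The Voronoi domain of `x ∈ X` on the sphere. -/
def Vor {n : ℕ} (X : Finset (E n)) (x : E n) : Set (E n) :=
  {w ∈ S n | (∀ y ∈ X, gdist w x ≤ gdist w y) ∧ gdist w x < Real.pi / 2}

/-- The spherical cap with center `x` and geodesic radius `ϑ`. -/
def cap {n : ℕ} (ϑ : ℝ) (x : E n) : Set (E n) := {w ∈ S n | gdist w x ≤ ϑ}

/-- The Delaunay mosaic: the nerve of the Voronoi domains. -/
def Del {n : ℕ} (X : Finset (E n)) : Set (Finset (E n)) :=
  {Q | Q.Nonempty ∧ Q ⊆ X ∧ (⋂ x ∈ (Q : Set (E n)), Vor X x).Nonempty}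

/-- The Delaunay complex for radius `ϑ`: the nerve of the restricted Voronoi domains. -/
def DelR {n : ℕ} (X : Finset (E n)) (ϑ : ℝ) : Set (Finset (E n)) :=
  {Q | Q.Nonempty ∧ Q ⊆ X ∧ (⋂ x ∈ (Q : Set (E n)), Vor X x ∩ cap ϑ x).Nonempty}

/-- The radius function on the Delaunay mosaic. -/
def Rfun {n : ℕ} (X : Finset (E n)) (Q : Finset (E n)) : ℝ :=
  sInf {ϑ | Q ∈ DelR X ϑ}

/-- `[L,U]` is an interval of the partition associated with the radius function:
a maximal interval of Delaunay simplices on which the radius function is constant. -/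
def IsInterval {n : ℕ} (X : Finset (E n)) (L U : Finset (E n)) : Prop :=
  L ⊆ U ∧ U ∈ Del X ∧
  (∀ Q, L ⊆ Q → Q ⊆ U → Q ∈ Del X ∧ Rfun X Q = Rfun X U) ∧
  (∀ L' U', L' ⊆ L → U ⊆ U' →
    (∀ Q, L' ⊆ Q → Q ⊆ U' → Q ∈ Del X ∧ Rfun X Q = Rfun X U') → L' = L ∧ U' = U)

/-- The number of intervals of type `(ℓ,k)` of the radius function whose geodesic radius
satisfies the predicate `pred`. -/
def intervalCount {n : ℕ} (X : Finset (E n)) (ℓ k : ℕ) (pred : ℝ → Prop) : ℕ :=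
  Set.ncard {p : Finset (E n) × Finset (E n) |
    IsInterval X p.1 p.2 ∧ p.1.card = ℓ + 1 ∧ p.2.card = k + 1 ∧ pred (Rfun X p.2)}

/-- A Poisson point process of density `ρ` on the sphere `S^n`:
a random finite subset of `S^n` such that the point counts in disjoint Borel sets are
independent, and the expected number of points in a Borel set `B` is `ρ` times the
(surface) Lebesgue measure of `B`.  Almost surely, the sample is in general position. -/
structure IsPoisson {n : ℕ} {Ω : Type*} [MeasurableSpace Ω] (P : Measure Ω)
    (X : Ω → Finset (E n)) (ρ : ℝ) : Prop where
  isProb : IsProbabilityMeasure P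
  onSphere : ∀ᵐ ω ∂P, (X ω : Set (E n)) ⊆ S n
  genPos : ∀ᵐ ω ∂P, GenPos (X ω)
  meas : ∀ B : Set (E n), MeasurableSet B → Measurable fun ω => count (X ω) B
  indep : ∀ {ι : Type} (B : ι → Set (E n)), (∀ i, MeasurableSet (B i)) →
    (Pairwise fun i j => Disjoint (B i) (B j)) →
    ProbabilityTheory.iIndepFun (fun i ω => count (X ω) (B i)) P
  integrable : ∀ B : Set (E n), MeasurableSet B →
    Integrable (fun ω => (count (X ω) B : ℝ)) P
  mean : ∀ B : Set (E n), MeasurableSet B →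
    ∫ ω, (count (X ω) B : ℝ) ∂P = ρ * (surface n B).toReal

/-! Constants -/

/-- Total measure of the Grassmannian `G(k,n)`. -/
def grassTotal (k n : ℕ) : ℝ :=
  (∏ i ∈ Finset.range k, sphereArea (n - i)) / (∏ i ∈ Finset.range k, sphereArea (i + 1))

/-- The `k`-dimensional volume of the convex hull of finitely many points of `ℝ^k`. -/
def simplexVol {m : ℕ} {ι : Type*} (u : ι → EuclideanSpace ℝ (Fin m)) : ℝ :=
  (volume (convexHull ℝ (Set.range u))).toReal

/-- Facet `i` of the simplex `u` spans a hyperplane separating the origin from the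
opposite vertex `u i`. -/
def FacetSeparates {m : ℕ} {ι : Type*} (u : ι → EuclideanSpace ℝ (Fin m)) (i : ι) : Prop :=
  ∃ (v : EuclideanSpace ℝ (Fin m)) (c : ℝ), v ≠ 0 ∧ (∀ j, j ≠ i → (inner ℝ v (u j) : ℝ) = c) ∧
    0 ≤ c ∧ c ≤ (inner ℝ v (u i) : ℝ)

/-- Product of `k+1` copies of the surface measure on the unit sphere of `ℝ^m`. -/
def sphereTuple (m N : ℕ) : Measure (Fin N → sphere (0 : EuclideanSpace ℝ (Fin m)) 1) :=
  Measure.pi fun _ => (volume : Measure (EuclideanSpace ℝ (Fin m))).toSphere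

/-- `E_{ℓ,k,n} = E[vol(u)^{n-k+1} ⋅ 1_{k-ℓ}(u)]` for `k+1` independent uniformly random
points on `S^{k-1}`. -/
def Econst (ℓ k n : ℕ) : ℝ :=
  ((sphereArea k) ^ (k+1))⁻¹ *
    ∫ u : Fin (k+1) → sphere (0 : EuclideanSpace ℝ (Fin k)) 1,
      (simplexVol fun i => (u i : EuclideanSpace ℝ (Fin k))) ^ (n - k + 1) *
      Set.indicator {u' : Fin (k+1) → sphere (0 : EuclideanSpace ℝ (Fin k)) 1 |
          Set.ncard {i | FacetSeparates (fun j => ((u' j : EuclideanSpace ℝ (Fin k)))) i} = k - ℓ}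
        (fun _ => (1:ℝ)) u ∂(sphereTuple k (k+1))

/-- The constant `C_{ℓ,k,n}`. -/
def Cconst (ℓ k n : ℕ) : ℝ :=
  grassTotal k n *
    (Real.Gamma k * (n:ℝ) ^ (k-1) * ((Nat.factorial k : ℝ)) ^ (n-k) * sphereArea k ^ (k+1) /
      ((k+1) * sphereArea n ^ k)) *
  Econst ℓ k n

/-- The incomplete Beta function `B(u; a, b)`. -/
def incBeta (u a b : ℝ) : ℝ := ∫ t in (0:ℝ)..u, t ^ (a-1) * (1-t) ^ (b-1)

/-- The area `A(ϑ)` of a spherical cap of geodesic radius `ϑ ≤ π/2` on `S^n`. -/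
def capArea (n : ℕ) (ϑ : ℝ) : ℝ :=
  sphereArea (n+1) * incBeta (Real.sin ϑ ^ 2) ((n:ℝ)/2) (1/2) /
    (2 * incBeta 1 ((n:ℝ)/2) (1/2))

/-- The lower incomplete Gamma function `γ(v;k)`, allowing `v = ∞` (then `γ(∞;k) = Γ(k)`). -/
def lincGamma (v : ℝ≥0∞) (k : ℕ) : ℝ :=
  ∫ t in {t : ℝ | 0 ≤ t ∧ ENNReal.ofReal t ≤ v}, t ^ (k-1) * Real.exp (-t)

end SphDel

namespace SphDel

/-- `Q` is the vertex set of a (proper) face of the convex hull of `X`: the points of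
`Q` are exactly the points of `X` lying on some supporting hyperplane of `conv(X)`. -/
def IsHullFace {n : ℕ} (X Q : Finset (E n)) : Prop :=
  Q ⊆ X ∧ ∃ (v : E n) (c : ℝ), v ≠ 0 ∧ (∀ q ∈ Q, (inner ℝ v q : ℝ) = c) ∧
    (∀ x ∈ X, (inner ℝ v x : ℝ) ≤ c) ∧ (∀ x ∈ X, (inner ℝ v x : ℝ) = c → x ∈ Q)

/-- `F` is the vertex set of a facet of `conv(X)` whose small cap is empty:
the supporting hyperplane `⟨v,⋅⟩ = c` has `‖v‖ = 1` and `c > 0`, so that the cap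
`{w ∈ S^n : ⟨v,w⟩ ≥ c}` is the small one, and no point of `X` lies in its interior. -/
def IsEmptySmallCapFacet {n : ℕ} (X F : Finset (E n)) : Prop :=
  F ⊆ X ∧ F.card = n + 1 ∧
    ∃ (v : E n) (c : ℝ), ‖v‖ = 1 ∧ 0 < c ∧ (∀ q ∈ F, (inner ℝ v q : ℝ) = c) ∧
      (∀ x ∈ X, (inner ℝ v x : ℝ) ≤ c) ∧ (∀ x ∈ X, (inner ℝ v x : ℝ) = c → x ∈ F)

end SphDel

/-
On the unit sphere the geodesic distance is `arccos ⟪x, y⟫`, so a point `w ∈ S^n` lies in the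
Voronoi domains of all points of `Q` exactly when the hyperplane `⟪w, ·⟫ = c`, with
`c = ⟪w, q⟫ > 0`, passes through `Q` and leaves all of `X` on the side of the origin: it bounds
an empty small cap. Rescaled to `⟪p, ·⟫ = 1`, the Delaunay simplices are the nonempty subsets
of the contact sets `X ∩ {⟪p, ·⟫ = 1}` with `⟪p, ·⟫ ≤ 1` on `X`.

General position makes every contact set a family of at most `n + 1` affinely independent
points, and since they lie on a hyperplane missing the origin they are even linearly
independent. A contact set with fewer than `n + 1` points is enlarged by tilting the
hyperplane about the span of the contact set until it meets a further point of `X`; this gives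
the facets. Conversely, every subset of a contact set is again a contact set, after a small
tilt lifting the hyperplane off the remaining vertices; this gives the faces. If `X` lies in no
closed hemisphere, every supporting hyperplane of `conv X` has the origin strictly on the side
of `X`, so every face of `conv X` arises this way.
-/

namespace SphDel

open Real Filter Topology
open scoped RealInnerProductSpace

section InnerProductSpace

variable {V : Type*} [NormedAddCommGroup V] [InnerProductSpace ℝ V]

lemma inner_mem_Icc_of_norm_eq_one {x y : V} (hx : ‖x‖ = 1) (hy : ‖y‖ = 1) :
    ⟪x, y⟫ ∈ Icc (-1 : ℝ) 1 :=
  abs_le.1 (by simpa [hx, hy] using abs_real_inner_le_norm x y)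

lemma arccos_inner_eq_two_mul_arcsin {x y : V} (hx : ‖x‖ = 1) (hy : ‖y‖ = 1) :
    arccos ⟪x, y⟫ = 2 * arcsin (dist x y / 2) := by
  have hs : dist x y / 2 ∈ Icc (0 : ℝ) 1 := by
    have : dist x y ≤ 2 := by
      rw [dist_eq_norm]
      linarith [norm_sub_le x y]
    constructor <;> linarith [dist_nonneg (x := x) (y := y)]
  refine arccos_eq_of_eq_cos (by linarith [arcsin_nonneg.2 hs.1])
    (by linarith [arcsin_le_pi_div_two (dist x y / 2)]) ?_
  have hsq : dist x y ^ 2 = 2 - 2 * ⟪x, y⟫ := by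
    rw [dist_eq_norm, norm_sub_sq_real, hx, hy]; ring
  rw [cos_two_mul, cos_sq', sin_arcsin (by linarith [hs.1]) hs.2]
  linarith

lemma exists_mem_orthogonal_inner_pos {K : Submodule ℝ V} [K.HasOrthogonalProjection] {x : V}
    (hx : x ∉ K) : ∃ u ∈ Kᗮ, 0 < ⟪u, x⟫ := by
  rw [← K.orthogonal_orthogonal, Submodule.mem_orthogonal] at hx
  push Not at hx
  obtain ⟨u, hu, hux⟩ := hx
  rcases hux.lt_or_gt with h | h
  · exact ⟨-u, neg_mem hu, by rw [inner_neg_left]; linarith⟩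
  · exact ⟨u, hu, h⟩

lemma inner_smul_left_le_self_iff {c : ℝ} (hc : 0 < c) {p x : V} :
    ⟪c • p, x⟫ ≤ c ↔ ⟪p, x⟫ ≤ 1 := by
  rw [real_inner_smul_left, mul_le_iff_le_one_right hc]

lemma inner_smul_left_eq_self_iff {c : ℝ} (hc : 0 < c) {p x : V} :
    ⟪c • p, x⟫ = c ↔ ⟪p, x⟫ = 1 := by
  rw [real_inner_smul_left, mul_eq_left₀ hc.ne']

def contactSet (X : Finset V) (p : V) : Finset V := X.filter fun x => ⟪p, x⟫ = 1

lemma mem_contactSet {X : Finset V} {p x : V} : x ∈ contactSet X p ↔ x ∈ X ∧ ⟪p, x⟫ = 1 :=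
  Finset.mem_filter

lemma ne_zero_of_mem_contactSet {X : Finset V} {p x : V} (hx : x ∈ contactSet X p) : p ≠ 0 := by
  rintro rfl
  simp [mem_contactSet] at hx

lemma subset_contactSet_inv_smul {X Q : Finset V} {v : V} {c : ℝ} (hc : 0 < c) (hQX : Q ⊆ X)
    (hQ : ∀ q ∈ Q, ⟪v, q⟫ = c) (hX : ∀ x ∈ X, ⟪v, x⟫ ≤ c) :
    (∀ x ∈ X, ⟪c⁻¹ • v, x⟫ ≤ 1) ∧ Q ⊆ contactSet X (c⁻¹ • v) := by
  have hv : v = c • c⁻¹ • v := (smul_inv_smul₀ hc.ne' v).symm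
  refine ⟨fun x hx => ?_, fun q hq => mem_contactSet.2 ⟨hQX hq, ?_⟩⟩
  · rw [← inner_smul_left_le_self_iff hc, ← hv]
    exact hX x hx
  · rw [← inner_smul_left_eq_self_iff hc, ← hv]
    exact hQ q hq

lemma exists_add_smul_inner_eq_one {X : Finset V} {p u : V} (hp : ∀ x ∈ X, ⟪p, x⟫ ≤ 1)
    (hu : ∃ x ∈ X, 0 < ⟪u, x⟫) :
    ∃ t : ℝ, 0 ≤ t ∧ (∀ x ∈ X, ⟪p + t • u, x⟫ ≤ 1) ∧
      ∃ y ∈ X, 0 < ⟪u, y⟫ ∧ ⟪p + t • u, y⟫ = 1 := by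
  have hT : (X.filter fun x => 0 < ⟪u, x⟫).Nonempty := by
    simpa only [Finset.filter_nonempty_iff] using hu
  -- `y` is the first point of `X` met by the hyperplane `⟪p + t • u, ·⟫ = 1` as `t` grows
  obtain ⟨y, hyT, hy⟩ := Finset.exists_min_image _ (fun x => (1 - ⟪p, x⟫) / ⟪u, x⟫) hT
  obtain ⟨hyX, huy⟩ := Finset.mem_filter.1 hyT
  have ht : 0 ≤ (1 - ⟪p, y⟫) / ⟪u, y⟫ := div_nonneg (by linarith [hp y hyX]) huy.le
  refine ⟨_, ht, fun x hx => ?_, y, hyX, huy, ?_⟩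
  · rw [inner_add_left, real_inner_smul_left]
    rcases le_or_gt ⟪u, x⟫ 0 with hux | hux
    · nlinarith [hp x hx]
    · have := (le_div_iff₀ hux).1 (hy x (Finset.mem_filter.2 ⟨hx, hux⟩))
      linarith
  · rw [inner_add_left, real_inner_smul_left, div_mul_cancel₀ _ huy.ne']
    ring

lemma exists_pos_forall_inner_sub_smul_lt {S : Finset V} {p w : V}
    (h : ∀ x ∈ S, ⟪p, x⟫ < 1) : ∃ t : ℝ, 0 < t ∧ ∀ x ∈ S, ⟪p - t • w, x⟫ < 1 := by
  have hev : ∀ᶠ t in 𝓝 (0 : ℝ), ∀ x ∈ S, ⟪p - t • w, x⟫ < 1 := by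
    refine Filter.eventually_all_finset _ |>.2 fun x hx => ?_
    have hcont : Continuous fun t : ℝ => ⟪p - t • w, x⟫ := by fun_prop
    exact hcont.continuousAt.eventually_lt continuousAt_const (by simpa using h x hx)
  obtain ⟨t, ht, hpos⟩ := ((hev.filter_mono nhdsWithin_le_nhds).and
    (self_mem_nhdsWithin (s := Ioi (0 : ℝ)))).exists
  exact ⟨t, hpos, ht⟩

lemma notMem_span_erase_of_affineIndependent [DecidableEq V] {G : Finset V}
    (hG : AffineIndependent ℝ ((↑) : G → V)) {p : V} (hp : ∀ x ∈ G, ⟪p, x⟫ = 1) {g : V}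
    (hg : g ∈ G) : g ∉ Submodule.span ℝ (G.erase g : Set V) := by
  intro hmem
  obtain ⟨f, -, hf⟩ := Submodule.mem_span_finset.1 hmem
  have hf1 : ∑ x ∈ G.erase g, f x = 1 := by
    have := congrArg (⟪p, ·⟫) hf
    simp only [inner_sum, real_inner_smul_right] at this
    rw [← hp g hg, ← this]
    exact Finset.sum_congr rfl fun x hx => by rw [hp x (Finset.mem_of_mem_erase hx), mul_one]
  -- `g = ∑ f x • x` with `∑ f x = 1` is an affine dependence among the points of `G`
  have key := hG.eq_zero_of_sum_eq_zero_subtype (w := Function.update f g (-1)) ?_ ?_ g hg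
  · simp at key
  all_goals
    rw [← Finset.add_sum_erase _ _ hg, Function.update_self]
    rw [Finset.sum_congr rfl fun x hx => by rw [Function.update_of_ne (Finset.ne_of_mem_erase hx)]]
  · rw [hf1]; ring
  · rw [hf]; simp

lemma exists_inner_eq_zero_and_pos_of_affineIndependent {G : Finset V}
    (hG : AffineIndependent ℝ ((↑) : G → V)) {p : V} (hp : ∀ x ∈ G, ⟪p, x⟫ = 1)
    {B : Finset V} (hB : B ⊆ G) :
    ∃ w : V, (∀ x ∈ G, x ∉ B → ⟪w, x⟫ = 0) ∧ ∀ b ∈ B, 0 < ⟪w, b⟫ := by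
  classical
  have : ∀ g, ∃ u : V, g ∈ G → (∀ x ∈ G.erase g, ⟪u, x⟫ = 0) ∧ 0 < ⟪u, g⟫ := fun g => by
    by_cases hg : g ∈ G
    · obtain ⟨u, huK, hug⟩ := exists_mem_orthogonal_inner_pos
        (notMem_span_erase_of_affineIndependent hG hp hg)
      exact ⟨u, fun _ => ⟨fun x hx =>
        Submodule.inner_left_of_mem_orthogonal (Submodule.subset_span hx) huK, hug⟩⟩
    · exact ⟨0, fun h => absurd h hg⟩
  choose u hu using this
  refine ⟨∑ g ∈ B, u g, fun x hx hxB => ?_, fun b hb => ?_⟩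
  · rw [sum_inner]
    exact Finset.sum_eq_zero fun g hg =>
      (hu g (hB hg)).1 x (Finset.mem_erase.2 ⟨fun h => hxB (h ▸ hg), hx⟩)
  · rw [sum_inner, Finset.sum_eq_single b (fun g hg hgb => (hu g (hB hg)).1 b
      (Finset.mem_erase.2 ⟨hgb.symm, hB hb⟩)) (fun h => absurd hb h)]
    exact (hu b (hB hb)).2

end InnerProductSpace

section Sphere

variable {n : ℕ}

lemma mem_S_iff {x : E n} : x ∈ S n ↔ ‖x‖ = 1 := mem_sphere_zero_iff_norm

lemma gdist_eq_arccos_inner {x y : E n} (hx : ‖x‖ = 1) (hy : ‖y‖ = 1) :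
    gdist x y = arccos ⟪x, y⟫ :=
  (arccos_inner_eq_two_mul_arcsin hx hy).symm

lemma mem_Vor_iff {X : Finset (E n)} (hXS : (X : Set (E n)) ⊆ S n) {q w : E n} (hq : q ∈ X) :
    w ∈ Vor X q ↔ ‖w‖ = 1 ∧ (∀ y ∈ X, ⟪w, y⟫ ≤ ⟪w, q⟫) ∧ 0 < ⟪w, q⟫ := by
  simp only [Vor, Set.mem_ofPred_eq, mem_S_iff]
  refine and_congr_right fun hw => ?_
  have hq1 := mem_S_iff.1 (hXS hq)
  rw [gdist_eq_arccos_inner hw hq1, arccos_lt_pi_div_two]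
  refine and_congr_left' (forall₂_congr fun y hy => ?_)
  have hy1 := mem_S_iff.1 (hXS hy)
  rw [gdist_eq_arccos_inner hw hy1]
  exact strictAntiOn_arccos.le_iff_ge (inner_mem_Icc_of_norm_eq_one hw hq1)
    (inner_mem_Icc_of_norm_eq_one hw hy1)

lemma mem_Del_iff {X Q : Finset (E n)} (hXS : (X : Set (E n)) ⊆ S n) :
    Q ∈ Del X ↔ Q.Nonempty ∧ Q ⊆ X ∧ ∃ w : E n, ‖w‖ = 1 ∧ ∃ c : ℝ, 0 < c ∧
      (∀ q ∈ Q, ⟪w, q⟫ = c) ∧ ∀ x ∈ X, ⟪w, x⟫ ≤ c := by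
  simp only [Del, Set.mem_ofPred_eq]
  refine and_congr_right fun ⟨q₀, hq₀⟩ => and_congr_right fun hQX => ?_
  simp only [Set.Nonempty, Set.mem_iInter₂, Finset.mem_coe]
  refine exists_congr fun w => ⟨fun hw => ?_, ?_⟩
  · obtain ⟨hw1, hmax, hpos⟩ := (mem_Vor_iff hXS (hQX hq₀)).1 (hw q₀ hq₀)
    refine ⟨hw1, _, hpos, fun q hq => le_antisymm (hmax q (hQX hq)) ?_, hmax⟩
    exact ((mem_Vor_iff hXS (hQX hq)).1 (hw q hq)).2.1 q₀ (hQX hq₀)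
  · rintro ⟨hw1, c, hc, hQ, hX⟩ q hq
    rw [mem_Vor_iff hXS (hQX hq), hQ q hq]
    exact ⟨hw1, hX, hc⟩

lemma mem_Del_iff_exists_cap {X Q : Finset (E n)} (hXS : (X : Set (E n)) ⊆ S n) :
    Q ∈ Del X ↔ Q.Nonempty ∧ Q ⊆ X ∧ ∃ z ∈ S n, ∃ ϑ : ℝ, 0 ≤ ϑ ∧ ϑ < π / 2 ∧
      (∀ q ∈ Q, gdist q z = ϑ) ∧ ∀ x ∈ X, ¬ gdist x z < ϑ := by
  rw [mem_Del_iff hXS]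
  refine and_congr_right fun ⟨q₀, hq₀⟩ => and_congr_right fun hQX => ?_
  have hX1 : ∀ x ∈ X, ‖x‖ = 1 := fun x hx => mem_S_iff.1 (hXS hx)
  constructor
  · rintro ⟨w, hw, c, hc, hQ, hX⟩
    refine ⟨w, mem_S_iff.2 hw, arccos c, arccos_nonneg c, arccos_lt_pi_div_two.2 hc,
      fun q hq => ?_, fun x hx => ?_⟩
    · rw [gdist_eq_arccos_inner (hX1 q (hQX hq)) hw, real_inner_comm, hQ q hq]
    · rw [gdist_eq_arccos_inner (hX1 x hx) hw, real_inner_comm, not_lt]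
      exact arccos_le_arccos (hX x hx)
  · rintro ⟨z, hz, ϑ, -, hϑ, hQ, hX⟩
    have hz1 := mem_S_iff.1 hz
    have hcos : ∀ x ∈ X, gdist x z = arccos ⟪z, x⟫ := fun x hx => by
      rw [gdist_eq_arccos_inner (hX1 x hx) hz1, real_inner_comm]
    have hIcc : ∀ x ∈ X, ⟪z, x⟫ ∈ Icc (-1 : ℝ) 1 := fun x hx =>
      inner_mem_Icc_of_norm_eq_one hz1 (hX1 x hx)
    refine ⟨z, hz1, ⟪z, q₀⟫, ?_, fun q hq => ?_, fun x hx => ?_⟩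
    · rw [← arccos_lt_pi_div_two, ← hcos q₀ (hQX hq₀), hQ q₀ hq₀]
      exact hϑ
    · refine arccos_injOn (hIcc q (hQX hq)) (hIcc q₀ (hQX hq₀)) ?_
      rw [← hcos q (hQX hq), ← hcos q₀ (hQX hq₀), hQ q hq, hQ q₀ hq₀]
    · rw [← strictAntiOn_arccos.le_iff_ge (hIcc q₀ (hQX hq₀)) (hIcc x hx), ← hcos x hx,
        ← hcos q₀ (hQX hq₀), hQ q₀ hq₀]
      exact not_lt.1 (hX x hx)

lemma mem_Del_iff_exists_contactSet {X Q : Finset (E n)} (hXS : (X : Set (E n)) ⊆ S n) :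
    Q ∈ Del X ↔ Q.Nonempty ∧ ∃ p : E n, (∀ x ∈ X, ⟪p, x⟫ ≤ 1) ∧ Q ⊆ contactSet X p := by
  rw [mem_Del_iff hXS]
  refine and_congr_right fun ⟨q₀, hq₀⟩ => ⟨?_, ?_⟩
  · rintro ⟨hQX, w, -, c, hc, hQ, hX⟩
    exact ⟨_, subset_contactSet_inv_smul hc hQX hQ hX⟩
  · rintro ⟨p, hp, hQ⟩
    have hp0 := ne_zero_of_mem_contactSet (hQ hq₀)
    have hc : 0 < ‖p‖⁻¹ := inv_pos.2 (norm_pos_iff.2 hp0)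
    refine ⟨fun q hq => (mem_contactSet.1 (hQ hq)).1, ‖p‖⁻¹ • p, norm_smul_inv_norm hp0, ‖p‖⁻¹,
      hc, fun q hq => ?_, fun x hx => (inner_smul_left_le_self_iff hc).2 (hp x hx)⟩
    exact (inner_smul_left_eq_self_iff hc).2 (mem_contactSet.1 (hQ hq)).2

lemma exists_hemisphere_of_inner_nonpos {X : Finset (E n)} (hXS : (X : Set (E n)) ⊆ S n)
    {v : E n} (hv : v ≠ 0) (hX : ∀ x ∈ X, ⟪v, x⟫ ≤ 0) :
    ∃ z ∈ S n, ∀ x ∈ X, gdist x z ≤ π / 2 := by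
  have hz : ‖-(‖v‖⁻¹ • v)‖ = 1 := by rw [norm_neg]; exact norm_smul_inv_norm hv
  refine ⟨_, mem_S_iff.2 hz, fun x hx => ?_⟩
  rw [gdist_eq_arccos_inner (mem_S_iff.1 (hXS hx)) hz, arccos_le_pi_div_two, inner_neg_right,
    real_inner_smul_right, real_inner_comm, neg_nonneg]
  exact mul_nonpos_of_nonneg_of_nonpos (inv_nonneg.2 (norm_nonneg v)) (hX x hx)

end Sphere

namespace GenPos

variable {n : ℕ} {X : Finset (E n)}

lemma card_le_of_forall_inner_eq (hgen : GenPos X) (hn : 1 ≤ n) {Y : Finset (E n)}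
    (hYX : Y ⊆ X) {v : E n} (hv : v ≠ 0) {c : ℝ} (hY : ∀ y ∈ Y, ⟪v, y⟫ = c) :
    Y.card ≤ n + 1 := by
  by_contra! hcard
  obtain ⟨Z, hZY, hZ⟩ := Finset.exists_subset_card_eq (show n + 2 ≤ Y.card by omega)
  refine (hgen.2 (n - 1) (by omega)).1 Z (hZY.trans hYX) (by omega)
    ⟨affineSpan ℝ Z, ?_, subset_affineSpan ℝ _⟩
  have : Fact (Module.finrank ℝ (E n) = n + 1) := ⟨finrank_euclideanSpace_fin⟩
  have hdir : (affineSpan ℝ (Z : Set (E n))).direction ≤ (ℝ ∙ v)ᗮ := by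
    rw [direction_affineSpan, vectorSpan_def, Submodule.span_le]
    rintro _ ⟨a, ha, b, hb, rfl⟩
    rw [SetLike.mem_coe, Submodule.mem_orthogonal_singleton_iff_inner_right]
    change ⟪v, a - b⟫ = 0
    rw [inner_sub_right, hY a (hZY ha), hY b (hZY hb), sub_self]
  calc _ ≤ Module.finrank ℝ (ℝ ∙ v)ᗮ := Submodule.finrank_mono hdir
    _ = n - 1 + 1 := by rw [Submodule.finrank_orthogonal_span_singleton (n := n) hv]; omega

lemma card_contactSet_le (hgen : GenPos X) (hn : 1 ≤ n) (p : E n) :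
    (contactSet X p).card ≤ n + 1 := by
  rcases (contactSet X p).eq_empty_or_nonempty with h | ⟨x, hx⟩
  · simp [h]
  · exact hgen.card_le_of_forall_inner_eq hn (Finset.filter_subset _ _)
      (ne_zero_of_mem_contactSet hx) fun y hy => (mem_contactSet.1 hy).2

lemma affineIndependent (hgen : GenPos X) {Y : Finset (E n)} (hYX : Y ⊆ X)
    (hY : Y.card ≤ n + 2) : AffineIndependent ℝ ((↑) : Y → E n) := by
  have hrange : Set.range ((↑) : Y → E n) = Y := Subtype.range_coe
  rcases Nat.lt_or_ge Y.card 3 with hsmall | hbig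
  · rcases Nat.lt_or_ge Y.card 2 with h1 | h2
    · have : Subsingleton Y := Finset.card_le_one_iff_subsingleton_coe.1 (by omega)
      exact affineIndependent_of_subsingleton ℝ _
    · rw [affineIndependent_iff_le_finrank_vectorSpan ℝ _ (n := 1) (by simp; omega), hrange,
        Nat.one_le_iff_ne_zero, Ne, Submodule.finrank_eq_zero, vectorSpan_eq_bot_iff_subsingleton,
        Set.not_subsingleton_iff]
      exact Finset.one_lt_card_iff_nontrivial.1 (by omega)
  · obtain ⟨m, hm⟩ : ∃ m, Y.card = m + 3 := ⟨Y.card - 3, by omega⟩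
    rw [affineIndependent_iff_not_finrank_vectorSpan_le ℝ _ (n := m + 1) (by simp [hm]), hrange]
    intro hle
    refine (hgen.2 m (by omega)).1 Y hYX hm ⟨affineSpan ℝ Y, ?_, subset_affineSpan ℝ _⟩
    rwa [direction_affineSpan]

lemma exists_contactSet_ssuperset (hgen : GenPos X) (hn : 1 ≤ n) {p : E n}
    (hp : ∀ x ∈ X, ⟪p, x⟫ ≤ 1) (hcard : (contactSet X p).card < n + 1) :
    ∃ p' : E n, (∀ x ∈ X, ⟪p', x⟫ ≤ 1) ∧ contactSet X p ⊂ contactSet X p' := by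
  set K := Submodule.span ℝ (contactSet X p : Set (E n))
  obtain ⟨x₁, hx₁X, hx₁K⟩ : ∃ x₁ ∈ X, x₁ ∉ K := by
    by_contra! hXK
    have hK : K ≠ ⊤ := fun h => by
      have := finrank_span_finset_le_card (R := ℝ) (contactSet X p)
      change Module.finrank ℝ K ≤ _ at this
      rw [h, finrank_top, finrank_euclideanSpace_fin] at this
      omega
    obtain ⟨v, hvK, hv⟩ := (Submodule.ne_bot_iff _).1 (mt Submodule.orthogonal_eq_bot_iff.1 hK)
    have := hgen.card_le_of_forall_inner_eq hn subset_rfl hv (c := 0) fun x hx =>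
      Submodule.inner_left_of_mem_orthogonal (hXK x hx) hvK
    exact absurd hgen.1 (by omega)
  obtain ⟨u, huK, hux₁⟩ := exists_mem_orthogonal_inner_pos hx₁K
  have hu : ∀ g ∈ contactSet X p, ⟪u, g⟫ = 0 := fun g hg =>
    Submodule.inner_left_of_mem_orthogonal (Submodule.subset_span hg) huK
  obtain ⟨t, -, hle, y, hyX, huy, hy⟩ := exists_add_smul_inner_eq_one hp ⟨x₁, hx₁X, hux₁⟩
  have hsub : contactSet X p ⊆ contactSet X (p + t • u) := fun g hg => by
    obtain ⟨hgX, hpg⟩ := mem_contactSet.1 hg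
    rw [mem_contactSet, inner_add_left, real_inner_smul_left, hu g hg, hpg]
    exact ⟨hgX, by ring⟩
  refine ⟨p + t • u, hle, (Finset.ssubset_iff_of_subset hsub).2
    ⟨y, mem_contactSet.2 ⟨hyX, hy⟩, fun hyp => huy.ne' (hu y hyp)⟩⟩

lemma exists_contactSet_card_eq (hgen : GenPos X) (hn : 1 ≤ n) {p : E n}
    (hp : ∀ x ∈ X, ⟪p, x⟫ ≤ 1) :
    ∃ p' : E n, (∀ x ∈ X, ⟪p', x⟫ ≤ 1) ∧ contactSet X p ⊆ contactSet X p' ∧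
      (contactSet X p').card = n + 1 := by
  by_cases hfull : n + 1 ≤ (contactSet X p).card
  · exact ⟨p, hp, subset_rfl, le_antisymm (hgen.card_contactSet_le hn p) hfull⟩
  · obtain ⟨p', hp', hlt⟩ := hgen.exists_contactSet_ssuperset hn hp (by omega)
    have := Finset.card_lt_card hlt
    obtain ⟨p'', hp'', hsub, hcard⟩ := hgen.exists_contactSet_card_eq hn hp'
    exact ⟨p'', hp'', hlt.subset.trans hsub, hcard⟩
termination_by n + 1 - (contactSet X p).card

lemma exists_contactSet_eq (hgen : GenPos X) (hn : 1 ≤ n) {p : E n}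
    (hp : ∀ x ∈ X, ⟪p, x⟫ ≤ 1) {Q : Finset (E n)} (hQ : Q ⊆ contactSet X p) :
    ∃ p' : E n, (∀ x ∈ X, ⟪p', x⟫ ≤ 1) ∧ contactSet X p' = Q := by
  classical
  set G := contactSet X p
  have hcard : G.card ≤ n + 1 := hgen.card_contactSet_le hn p
  have hG : AffineIndependent ℝ ((↑) : G → E n) :=
    hgen.affineIndependent (Finset.filter_subset _ X) (by omega)
  obtain ⟨w, hwQ, hwG⟩ := exists_inner_eq_zero_and_pos_of_affineIndependent hG
    (fun x hx => (mem_contactSet.1 hx).2) (Finset.sdiff_subset (s := G) (t := Q))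
  obtain ⟨t, ht, hout⟩ := exists_pos_forall_inner_sub_smul_lt (S := X.filter (· ∉ G)) (w := w)
    fun x hx => by
      obtain ⟨hxX, hxG⟩ := Finset.mem_filter.1 hx
      exact (hp x hxX).lt_of_ne fun h => hxG (mem_contactSet.2 ⟨hxX, h⟩)
  have hinner : ∀ x, ⟪p - t • w, x⟫ = ⟪p, x⟫ - t * ⟪w, x⟫ := fun x => by
    rw [inner_sub_left, real_inner_smul_left]
  have hlt : ∀ x ∈ X, x ∉ Q → ⟪p - t • w, x⟫ < 1 := fun x hxX hxQ => by
    by_cases hxG : x ∈ G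
    · rw [hinner, (mem_contactSet.1 hxG).2]
      have := hwG x (Finset.mem_sdiff.2 ⟨hxG, hxQ⟩)
      nlinarith
    · exact hout x (Finset.mem_filter.2 ⟨hxX, hxG⟩)
  have hQ1 : ∀ q ∈ Q, ⟪p - t • w, q⟫ = 1 := fun q hq => by
    rw [hinner, (mem_contactSet.1 (hQ hq)).2,
      hwQ q (hQ hq) fun h => (Finset.mem_sdiff.1 h).2 hq, mul_zero, sub_zero]
  refine ⟨p - t • w, fun x hx => ?_, Finset.ext fun x => ⟨fun hx => ?_, fun hx => ?_⟩⟩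
  · by_cases hxQ : x ∈ Q
    · exact (hQ1 x hxQ).le
    · exact (hlt x hx hxQ).le
  · obtain ⟨hxX, hx1⟩ := mem_contactSet.1 hx
    by_contra hxQ
    exact (hlt x hxX hxQ).ne hx1
  · exact mem_contactSet.2 ⟨(mem_contactSet.1 (hQ hx)).1, hQ1 x hx⟩

end GenPos

lemma isEmptySmallCapFacet_contactSet {n : ℕ} {X : Finset (E n)} {p : E n}
    (hp : ∀ x ∈ X, ⟪p, x⟫ ≤ 1) (hcard : (contactSet X p).card = n + 1) :
    IsEmptySmallCapFacet X (contactSet X p) := by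
  obtain ⟨x₀, hx₀⟩ := Finset.card_pos.1 (by omega : 0 < (contactSet X p).card)
  have hp0 := ne_zero_of_mem_contactSet hx₀
  have hc : 0 < ‖p‖⁻¹ := inv_pos.2 (norm_pos_iff.2 hp0)
  refine ⟨Finset.filter_subset _ _, hcard, ‖p‖⁻¹ • p, ‖p‖⁻¹, norm_smul_inv_norm hp0, hc,
    fun q hq => ?_, fun x hx => (inner_smul_left_le_self_iff hc).2 (hp x hx), fun x hx hxc => ?_⟩
  · exact (inner_smul_left_eq_self_iff hc).2 (mem_contactSet.1 hq).2
  · exact mem_contactSet.2 ⟨hx, (inner_smul_left_eq_self_iff hc).1 hxc⟩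

lemma isHullFace_contactSet {n : ℕ} {X : Finset (E n)} {p : E n} (hp : ∀ x ∈ X, ⟪p, x⟫ ≤ 1)
    (hne : (contactSet X p).Nonempty) : IsHullFace X (contactSet X p) :=
  ⟨Finset.filter_subset _ _, p, 1, ne_zero_of_mem_contactSet hne.choose_spec,
    fun _ hq => (mem_contactSet.1 hq).2, hp, fun _ hx h => mem_contactSet.2 ⟨hx, h⟩⟩

end SphDel

open SphDel

/-- **Delaunay mosaics and inscribed polytopes.**  For finite `X ⊆ S^n` in general
position: `Q ∈ Del(X)` iff there is an `(n-1)`-sphere on `S^n` through `Q` that is not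
a great-sphere and whose small cap is empty; equivalently the simplices of `Del(X)` are
exactly the faces of the facets of `conv(X)` whose small caps are empty; and if `X` is
not contained in any closed hemisphere then `Del(X)` is isomorphic to the boundary
complex of the inscribed polytope `conv(X)`. -/
theorem delaunay_inscribed_polytope (n : ℕ) (hn : 1 ≤ n) (X : Finset (E n))
    (hXS : (X : Set (E n)) ⊆ S n) (hgen : GenPos X) :
    (∀ Q : Finset (E n), Q ∈ Del X ↔
      (Q.Nonempty ∧ Q ⊆ X ∧ ∃ z ∈ S n, ∃ ϑ : ℝ, 0 ≤ ϑ ∧ ϑ < Real.pi / 2 ∧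
        (∀ q ∈ Q, gdist q z = ϑ) ∧ ∀ x ∈ X, ¬ gdist x z < ϑ)) ∧
    (∀ Q : Finset (E n), Q ∈ Del X ↔
      (Q.Nonempty ∧ ∃ F : Finset (E n), IsEmptySmallCapFacet X F ∧ Q ⊆ F)) ∧
    ((¬ ∃ z ∈ S n, ∀ x ∈ X, gdist x z ≤ Real.pi / 2) →
      ∀ Q : Finset (E n), Q ∈ Del X ↔ (Q.Nonempty ∧ IsHullFace X Q)) := by
  refine ⟨fun Q => mem_Del_iff_exists_cap hXS, fun Q => ?_, fun hhemi Q => ?_⟩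
  · rw [mem_Del_iff_exists_contactSet hXS]
    refine and_congr_right fun _ => ⟨?_, ?_⟩
    · rintro ⟨p, hp, hQp⟩
      obtain ⟨p', hp', hsub, hcard⟩ := hgen.exists_contactSet_card_eq hn hp
      exact ⟨_, isEmptySmallCapFacet_contactSet hp' hcard, hQp.trans hsub⟩
    · rintro ⟨F, ⟨hFX, -, v, c, -, hc, hF, hX, -⟩, hQF⟩
      obtain ⟨hp, hFp⟩ := subset_contactSet_inv_smul hc hFX hF hX
      exact ⟨_, hp, hQF.trans hFp⟩
  · rw [mem_Del_iff_exists_contactSet hXS]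
    refine and_congr_right fun hQ => ⟨?_, ?_⟩
    · rintro ⟨p, hp, hQp⟩
      obtain ⟨p', hp', rfl⟩ := hgen.exists_contactSet_eq hn hp hQp
      exact isHullFace_contactSet hp' hQ
    · rintro ⟨hQX, v, c, hv, hQv, hX, -⟩
      have hc : 0 < c := not_le.1 fun hc =>
        hhemi (exists_hemisphere_of_inner_nonpos hXS hv fun x hx => (hX x hx).trans hc)
      exact ⟨_, subset_contactSet_inv_smul hc hQX hQv hX⟩
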